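/- arXiv:math/0012184 — 2 statements merged into one kernel-verified Lean document; each statement's English description precedes it below -/
import Mathlib

section
/- Every polynomial P ∈ ℂ[w₁,w₂] that is invariant under the action of SO(2,ℂ) on ℂ² (i.e. P(aw₁ − bw₂, bw₁ + aw₂) = P(w₁,w₂) for all a, b ∈ ℂ with a² + b² = 1) is a polynomial in the complex scalar product w·w = w₁² + w₂²: there exists a unique one-variable polynomial Q ∈ ℂ[T] with P(w₁,w₂) = Q(w₁² + w₂²) for all (w₁,w₂) ∈ ℂ². In particular the algebra of SO(2,ℂ)-invariants is free on the single generator w·w. -/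
open MvPolynomial

lemma myEval_eval₂ (P : MvPolynomial (Fin 2) ℂ) (g : Fin 2 → Polynomial ℂ) (x : ℂ) :
    (eval₂ Polynomial.C g P).eval x = eval (fun i => (g i).eval x) P := by
  rw [MvPolynomial.polynomial_eval_eval₂]
  have : (Polynomial.evalRingHom x).comp Polynomial.C = RingHom.id ℂ := by
    ext r; simp
  rw [this]
  rfl

lemma myCoeff_comp_neg_X (p : Polynomial ℂ) (n : ℕ) :
    (p.comp (-Polynomial.X)).coeff n = (-1) ^ n * p.coeff n := by
  induction p using Polynomial.induction_on' with
  | add f g hf hg => simp [Polynomial.add_comp, hf, hg, mul_add]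
  | monomial k a =>
    rw [Polynomial.monomial_comp, neg_pow,
      show ((-1:Polynomial ℂ)^k) = Polynomial.C ((-1:ℂ)^k) by simp, ← mul_assoc,
      ← Polynomial.C_mul]
    simp only [Polynomial.coeff_C_mul, Polynomial.coeff_X_pow, Polynomial.coeff_monomial]
    by_cases hnk : n = k
    · subst hnk; simp [mul_comm]
    · simp [hnk, Ne.symm hnk]

lemma myEven_exists (p : Polynomial ℂ) (h : ∀ t : ℂ, p.eval (-t) = p.eval t) :
    ∃ q : Polynomial ℂ, ∀ t : ℂ, p.eval t = q.eval (t ^ 2) := by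
  have hcomp : p.comp (-Polynomial.X) = p := Polynomial.funext (fun r => by simp [h r])
  have hodd : ∀ n, Odd n → p.coeff n = 0 := by
    intro n hn
    have h1 : (p.comp (-Polynomial.X)).coeff n = p.coeff n := by rw [hcomp]
    rw [myCoeff_comp_neg_X, Odd.neg_one_pow hn, neg_one_mul] at h1
    have h2 : (2:ℂ) * p.coeff n = 0 := by linear_combination -h1
    rcases mul_eq_zero.mp h2 with h'' | h''
    · norm_num at h''
    · exact h'' 
  refine ⟨p.sum fun n a => Polynomial.C a * Polynomial.X ^ (n / 2), fun t => ?_⟩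
  rw [Polynomial.eval_eq_sum, Polynomial.sum, Polynomial.sum, Polynomial.eval_finset_sum]
  refine Finset.sum_congr rfl fun n hn => ?_
  have ha : p.coeff n ≠ 0 := Polynomial.mem_support_iff.mp hn
  have he : Even n := Nat.not_odd_iff_even.mp (fun ho => ha (hodd n ho))
  simp only [Polynomial.eval_mul, Polynomial.eval_C, Polynomial.eval_pow, Polynomial.eval_X,
    ← pow_mul]
  rw [Nat.two_mul_div_two_of_even he]


/-- Every polynomial `P ∈ ℂ[w₁,w₂]` invariant under the action of `SO(2,ℂ)` on `ℂ²`
(the matrices `[[a,−b],[b,a]]` with `a² + b² = 1`) is a polynomial in the complex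
scalar product `w·w = w₁² + w₂²`, via a *unique* one-variable polynomial
`Q ∈ ℂ[T]`: `P(w₁,w₂) = Q(w₁² + w₂²)`.  In particular the algebra of
`SO(2,ℂ)`-invariants is free on the single generator `w·w`. -/
theorem so2C_invariants_free_on_scalar_product
    (P : MvPolynomial (Fin 2) ℂ)
    (hP : ∀ a b : ℂ, a ^ 2 + b ^ 2 = 1 →
      ∀ w₁ w₂ : ℂ, eval ![a * w₁ - b * w₂, b * w₁ + a * w₂] P = eval ![w₁, w₂] P) :
    ∃! Q : Polynomial ℂ, ∀ w₁ w₂ : ℂ,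
      eval ![w₁, w₂] P = Q.eval (w₁ ^ 2 + w₂ ^ 2) := by
  -- the one-variable restriction p(t) = P(t, 0)
  set p : Polynomial ℂ := eval₂ Polynomial.C ![Polynomial.X, 0] P with hpdef
  have hp : ∀ t : ℂ, p.eval t = eval ![t, 0] P := by
    intro t
    rw [hpdef, myEval_eval₂]
    have hvec : (fun i => Polynomial.eval t (![Polynomial.X, 0] i)) = ![t, (0:ℂ)] := by
      funext i; fin_cases i <;> simp
    rw [hvec]
  have hpeven : ∀ t : ℂ, p.eval (-t) = p.eval t := by
    intro t
    rw [hp, hp]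
    have := hP (-1) 0 (by norm_num) t 0
    simpa using this
  obtain ⟨q, hq⟩ := myEven_exists p hpeven
  have key : ∀ w₁ w₂ : ℂ, eval ![w₁, w₂] P = q.eval (w₁ ^ 2 + w₂ ^ 2) := by
    intro w₁ w₂
    by_cases h0 : w₁ ^ 2 + w₂ ^ 2 = 0
    · -- null cone case
      by_cases hw1 : w₁ = 0
      · have hw2 : w₂ = 0 := by
          have : w₂ ^ 2 = 0 := by rw [hw1] at h0; simpa using h0
          exact pow_eq_zero_iff (n := 2) (by norm_num) |>.mp this
        subst hw1; subst hw2
        rw [show ((0:ℂ) ^ 2 + 0 ^ 2) = (0:ℂ)^2 by ring, ← hq, hp]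
      · set f : Polynomial ℂ :=
          eval₂ Polynomial.C ![Polynomial.C w₁ * Polynomial.X, Polynomial.C w₂ * Polynomial.X] P
          with hfdef
        have hf : ∀ x : ℂ, f.eval x = eval ![w₁ * x, w₂ * x] P := by
          intro x
          rw [hfdef, myEval_eval₂]
          have hvec : (fun i => Polynomial.eval x
              (![Polynomial.C w₁ * Polynomial.X, Polynomial.C w₂ * Polynomial.X] i))
              = ![w₁ * x, w₂ * x] := by
            funext i; fin_cases i <;> simp
          rw [hvec]
        have hconst : ∀ l : ℂ, l ≠ 0 → f.eval l = f.eval 1 := by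
          intro l hl
          have hab : ((l + l⁻¹)/2) ^ 2 + (w₂ * (l - l⁻¹) / (2 * w₁)) ^ 2 = 1 := by
            field_simp
            linear_combination ((l^2-1)^2) * h0
          have h1 := hP _ _ hab w₁ w₂
          have hv : (![((l + l⁻¹)/2) * w₁ - (w₂ * (l - l⁻¹) / (2 * w₁)) * w₂,
              (w₂ * (l - l⁻¹) / (2 * w₁)) * w₁ + ((l + l⁻¹)/2) * w₂] : Fin 2 → ℂ)
              = ![w₁ * l, w₂ * l] := by
            funext i
            fin_cases i
            · show ((l + l⁻¹)/2) * w₁ - (w₂ * (l - l⁻¹) / (2 * w₁)) * w₂ = w₁ * l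
              field_simp
              linear_combination (1-l^2) * h0
            · show (w₂ * (l - l⁻¹) / (2 * w₁)) * w₁ + ((l + l⁻¹)/2) * w₂ = w₂ * l
              field_simp
              ring
          rw [hv] at h1
          rw [hf, hf, h1, mul_one, mul_one]
        have hzero : f - Polynomial.C (f.eval 1) = 0 := by
          apply Polynomial.eq_zero_of_infinite_isRoot
          apply Set.Infinite.mono (s := ({(0:ℂ)}ᶜ : Set ℂ))
          · intro x hx
            simp only [Set.mem_compl_iff, Set.mem_singleton_iff] at hx
            simp [Polynomial.IsRoot, hconst x hx]
          · exact Set.Finite.infinite_compl (Set.finite_singleton 0)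
        have h01 : f.eval 0 = f.eval 1 := by
          have := congrArg (Polynomial.eval (0:ℂ)) hzero
          simpa [sub_eq_zero] using this
        have e0 : f.eval 0 = q.eval (w₁ ^ 2 + w₂ ^ 2) := by
          rw [hf, h0, show ((0:ℂ)) = (0:ℂ)^2 by ring, ← hq, hp]
          norm_num
        have e1 : f.eval 1 = eval ![w₁, w₂] P := by rw [hf, mul_one, mul_one]
        rw [← e1, ← h01, e0]
    · -- generic case: rotate to the axis
      obtain ⟨c, hc⟩ := IsAlgClosed.exists_pow_nat_eq (k := ℂ) (w₁ ^ 2 + w₂ ^ 2) (n := 2)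
        (by norm_num)
      have hc0 : c ≠ 0 := by
        intro h; rw [h] at hc; exact h0 (by rw [← hc]; ring)
      have hab : (w₁ / c) ^ 2 + (-w₂ / c) ^ 2 = 1 := by
        field_simp
        linear_combination -hc
      have h1 := hP _ _ hab w₁ w₂
      have hv : (![(w₁ / c) * w₁ - (-w₂ / c) * w₂, (-w₂ / c) * w₁ + (w₁ / c) * w₂] : Fin 2 → ℂ)
          = ![c, 0] := by
        funext i
        fin_cases i
        · show (w₁ / c) * w₁ - (-w₂ / c) * w₂ = c
          field_simp
          linear_combination -hc
        · show (-w₂ / c) * w₁ + (w₁ / c) * w₂ = 0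
          field_simp
          ring
      rw [hv] at h1
      rw [← h1, ← hp, hq, hc]
  refine ⟨q, key, ?_⟩
  intro Q hQ
  apply Polynomial.funext
  intro s
  obtain ⟨c, hc⟩ := IsAlgClosed.exists_pow_nat_eq (k := ℂ) s (n := 2) (by norm_num)
  have h1 := hQ c 0
  have h2 := key c 0
  rw [h1] at h2
  have h3 : c ^ 2 + 0 ^ 2 = s := by rw [← hc]; ring
  rw [h3] at h2
  exact h2
end

section
/- Let (q,p), (q',p') ∈ ℝ² × ℝ² both lie on the zero locus of the angular momentum, i.e. q₁p₂ − q₂p₁ = 0 and q'₁p'₂ − q'₂p'₁ = 0. Then (q'·q' − p'·p', 2 q'·p') = (q·q − p·p, 2 q·p) if and only if there exists A ∈ SO(2,ℝ) with q' = Aq and p' = Ap. In other words, on the zero locus the invariants x₁ = q·q − p·p and x₂ = 2 q·p separate the SO(2,ℝ)-orbits, so the induced map μ⁻¹(0)/SO(2,ℝ) → ℂ is injective. -/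
set_option maxHeartbeats 1000000

open Matrix

lemma rot_trans (a b : ℝ) : (!![a,-b;b,a])ᵀ = !![a,b;-b,a] := by
  ext i j; fin_cases i <;> fin_cases j <;> rfl

lemma rot_orth (a b : ℝ) (hab : a*a + b*b = 1) :
    (!![a,-b;b,a])ᵀ * !![a,-b;b,a] = 1 ∧ (!![a,-b;b,a]).det = 1 := by
  constructor
  · rw [rot_trans, Matrix.mul_fin_two]
    ext i j
    fin_cases i <;> fin_cases j <;> simp [Matrix.one_apply] <;> linarith
  · simp [Matrix.det_fin_two_of]; linarith

lemma rot_mulVec (a b : ℝ) (u : Fin 2 → ℝ) :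
    (!![a,-b;b,a]).mulVec u = ![a*u 0 - b*u 1, b*u 0 + a*u 1] := by
  funext i
  fin_cases i <;>
    simp [Matrix.mulVec, dotProduct, Fin.sum_univ_two] <;> ring


lemma sq_add_sq_zero {x y : ℝ} (hxy : x*x + y*y = 0) : x = 0 ∧ y = 0 := by
  have hx := mul_self_nonneg x
  have hy := mul_self_nonneg y
  exact ⟨mul_self_eq_zero.mp (by linarith), mul_self_eq_zero.mp (by linarith)⟩


/-- On the zero locus of the angular momentum the invariants `x₁ = q·q − p·p` and
`x₂ = 2 q·p` separate the `SO(2,ℝ)`-orbits: for `(q,p)` and `(q',p')` with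
`q₁p₂ − q₂p₁ = 0` and `q'₁p'₂ − q'₂p'₁ = 0`, one has
`(q'·q' − p'·p', 2 q'·p') = (q·q − p·p, 2 q·p)` if and only if there is `A ∈ SO(2,ℝ)`
with `q' = Aq` and `p' = Ap`.  In particular the induced map
`μ⁻¹(0)/SO(2,ℝ) → ℂ` is injective. -/
theorem invariants_separate_orbits_on_zero_locus
    (q p q' p' : Fin 2 → ℝ)
    (h : q 0 * p 1 - q 1 * p 0 = 0) (h' : q' 0 * p' 1 - q' 1 * p' 0 = 0) :
    (((q' 0 * q' 0 + q' 1 * q' 1) - (p' 0 * p' 0 + p' 1 * p' 1)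
          = (q 0 * q 0 + q 1 * q 1) - (p 0 * p 0 + p 1 * p 1))
      ∧ (2 * (q' 0 * p' 0 + q' 1 * p' 1) = 2 * (q 0 * p 0 + q 1 * p 1)))
    ↔ ∃ A : Matrix (Fin 2) (Fin 2) ℝ, Aᵀ * A = 1 ∧ A.det = 1 ∧
        A.mulVec q = q' ∧ A.mulVec p = p' := by
  constructor
  · rintro ⟨hx1, hx2⟩
    have hc : q' 0 * p' 0 + q' 1 * p' 1 = q 0 * p 0 + q 1 * p 1 := by linarith
    have hst : (q 0*q 0+q 1*q 1) * (p 0*p 0+p 1*p 1)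
        = (q 0*p 0+q 1*p 1)*(q 0*p 0+q 1*p 1) := by
      linear_combination (q 0 * p 1 - q 1 * p 0) * h
    have hst' : (q' 0*q' 0+q' 1*q' 1) * (p' 0*p' 0+p' 1*p' 1)
        = (q' 0*p' 0+q' 1*p' 1)*(q' 0*p' 0+q' 1*p' 1) := by
      linear_combination (q' 0 * p' 1 - q' 1 * p' 0) * h'
    have hqnn : 0 ≤ q 0*q 0+q 1*q 1 :=
      add_nonneg (mul_self_nonneg _) (mul_self_nonneg _)
    have hpnn : 0 ≤ p 0*p 0+p 1*p 1 :=
      add_nonneg (mul_self_nonneg _) (mul_self_nonneg _)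
    have hqnn' : 0 ≤ q' 0*q' 0+q' 1*q' 1 :=
      add_nonneg (mul_self_nonneg _) (mul_self_nonneg _)
    have hpnn' : 0 ≤ p' 0*p' 0+p' 1*p' 1 :=
      add_nonneg (mul_self_nonneg _) (mul_self_nonneg _)
    have esq : ((q' 0*q' 0+q' 1*q' 1) + (p' 0*p' 0+p' 1*p' 1))^2
        = ((q 0*q 0+q 1*q 1) + (p 0*p 0+p 1*p 1))^2 := by
      linear_combination ((q' 0*q' 0+q' 1*q' 1) - (p' 0*p' 0+p' 1*p' 1)
          + (q 0*q 0+q 1*q 1) - (p 0*p 0+p 1*p 1)) * hx1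
        + 4*hst' - 4*hst
        + 4*((q' 0*p' 0+q' 1*p' 1) + (q 0*p 0+q 1*p 1)) * hc
    have e2 : (q' 0*q' 0+q' 1*q' 1) + (p' 0*p' 0+p' 1*p' 1)
        = (q 0*q 0+q 1*q 1) + (p 0*p 0+p 1*p 1) := by
      nlinarith [esq, hqnn, hpnn, hqnn', hpnn']
    have hs'eq : q' 0*q' 0+q' 1*q' 1 = q 0*q 0+q 1*q 1 := by linarith
    have ht'eq : p' 0*p' 0+p' 1*p' 1 = p 0*p 0+p 1*p 1 := by linarith
    by_cases hq : q 0*q 0 + q 1*q 1 = 0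
    · obtain ⟨q00, q10⟩ := sq_add_sq_zero hq
      obtain ⟨q'00, q'10⟩ := sq_add_sq_zero (hs'eq.trans hq)
      by_cases hp : p 0*p 0 + p 1*p 1 = 0
      · obtain ⟨p00, p10⟩ := sq_add_sq_zero hp
        obtain ⟨p'00, p'10⟩ := sq_add_sq_zero (ht'eq.trans hp)
        refine ⟨1, by simp, by simp, ?_, ?_⟩ <;>
          · rw [Matrix.one_mulVec]; funext i; fin_cases i <;> simp_all
      · set t := p 0*p 0 + p 1*p 1 with ht
        set a := (p 0*p' 0+p 1*p' 1)/t with ha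
        set b := (p 0*p' 1 - p 1*p' 0)/t with hb
        have hab : a*a + b*b = 1 := by
          rw [ha, hb]; field_simp
          linear_combination (p 0*p 0+p 1*p 1) * ht'eq
        refine ⟨!![a,-b;b,a], (rot_orth a b hab).1, (rot_orth a b hab).2, ?_, ?_⟩
        · rw [rot_mulVec]; funext i; fin_cases i <;>
            simp [ha, hb, q00, q10, q'00, q'10]
        · rw [rot_mulVec]; funext i; fin_cases i <;>
            · simp only [Fin.zero_eta, Fin.mk_one, Matrix.cons_val_zero, Matrix.cons_val_one, Matrix.head_cons]
              rw [ha, hb]; field_simp; ring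
    · set s := q 0*q 0 + q 1*q 1 with hsdef
      set a := (q 0*q' 0+q 1*q' 1)/s with ha
      set b := (q 0*q' 1 - q 1*q' 0)/s with hb
      have hab : a*a + b*b = 1 := by
        rw [ha, hb]; field_simp
        linear_combination (q 0*q 0+q 1*q 1) * hs'eq
      have hp0 : s * p 0 = (q 0*p 0+q 1*p 1) * q 0 := by
        rw [hsdef]; linear_combination (-(q 1))*h
      have hp1 : s * p 1 = (q 0*p 0+q 1*p 1) * q 1 := by
        rw [hsdef]; linear_combination (q 0)*h
      have hp'0 : (q' 0*q' 0+q' 1*q' 1) * p' 0 = (q' 0*p' 0+q' 1*p' 1) * q' 0 := by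
        linear_combination (-(q' 1))*h'
      have hp'1 : (q' 0*q' 0+q' 1*q' 1) * p' 1 = (q' 0*p' 0+q' 1*p' 1) * q' 1 := by
        linear_combination (q' 0)*h'
      have G0 : (q 0*q' 0+q 1*q' 1) * p 0 - (q 0*q' 1 - q 1*q' 0) * p 1 = p' 0 * s := by
        refine mul_left_cancel₀ hq ?_
        rw [hsdef] at hp0 hp1 ⊢
        linear_combination (q 0*q' 0+q 1*q' 1)*hp0 - (q 0*q' 1-q 1*q' 0)*hp1
          - (q 0*q 0+q 1*q 1)*hp'0 + (q 0*q 0+q 1*q 1)*p' 0*hs'eq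
          - (q 0*q 0+q 1*q 1)*q' 0*hc
      have G1 : (q 0*q' 1 - q 1*q' 0) * p 0 + (q 0*q' 0+q 1*q' 1) * p 1 = p' 1 * s := by
        refine mul_left_cancel₀ hq ?_
        rw [hsdef] at hp0 hp1 ⊢
        linear_combination (q 0*q' 1-q 1*q' 0)*hp0 + (q 0*q' 0+q 1*q' 1)*hp1
          - (q 0*q 0+q 1*q 1)*hp'1 + (q 0*q 0+q 1*q 1)*p' 1*hs'eq
          - (q 0*q 0+q 1*q 1)*q' 1*hc
      refine ⟨!![a,-b;b,a], (rot_orth a b hab).1, (rot_orth a b hab).2, ?_, ?_⟩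
      · rw [rot_mulVec]; funext i; fin_cases i <;>
          · simp only [Fin.zero_eta, Fin.mk_one, Matrix.cons_val_zero, Matrix.cons_val_one, Matrix.head_cons]
            rw [ha, hb]; field_simp; ring
      · rw [rot_mulVec]; funext i; fin_cases i <;>
          · simp only [Fin.zero_eta, Fin.mk_one, Matrix.cons_val_zero, Matrix.cons_val_one, Matrix.head_cons]
            rw [ha, hb]; field_simp
            first
              | linear_combination G0
              | linear_combination G1
  · rintro ⟨A, hA, hdet, hq, hp⟩
    have e00 := congrFun (congrFun hA 0) 0
    have e01 := congrFun (congrFun hA 0) 1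
    have e11 := congrFun (congrFun hA 1) 1
    simp [Matrix.mul_apply, Fin.sum_univ_two, Matrix.one_apply,
      Matrix.transpose_apply] at e00 e01 e11
    have hq0 := congrFun hq 0
    have hq1 := congrFun hq 1
    have hp0 := congrFun hp 0
    have hp1 := congrFun hp 1
    simp [Matrix.mulVec, dotProduct, Fin.sum_univ_two] at hq0 hq1 hp0 hp1
    constructor
    · rw [← hq0, ← hq1, ← hp0, ← hp1]
      linear_combination (q 0*q 0 - p 0*p 0)*e00 + 2*(q 0*q 1 - p 0*p 1)*e01
        + (q 1*q 1 - p 1*p 1)*e11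
    · rw [← hq0, ← hq1, ← hp0, ← hp1]
      linear_combination 2*(q 0*p 0)*e00 + 2*(q 0*p 1 + q 1*p 0)*e01
        + 2*(q 1*p 1)*e11
end
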